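/- Let z ∈ DL_3(q) have m_i(z) > 0 for i = 1 or i = 2, and let ζ = ζ^i_1 (the vertex with m_i = l_i = 1 via the label-1 edge, all else trivial). Then d(z, ζ) − d(z, id) ≤ 0, while the horofunction β (defined by the sequence β_n with m_3 = l_3 = n) satisfies β(ζ) > 0; hence d(z,ζ) − d(z,id) ≠ β(ζ). -/

import Mathlib

open Finset

/-- A vertex of the oriented (q+1)-valent tree `T` underlying Diestel–Leader graphs:
descend `m` edges from the basepoint `o` along its ancestor ray (whose edges all
carry the label `0`), then ascend along the edge labels listed in `w`.
The normalization condition (if `m ≠ 0`, the first label of `w` is not `0`)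
makes this representation unique. -/
structure TreeVertex (q : ℕ) where
  m : ℕ
  w : List (Fin q)
  norm : ∀ a t, m ≠ 0 → w = a :: t → (a : ℕ) ≠ 0

namespace TreeVertex

variable {q : ℕ}

/-- the basepoint `o` of the tree -/
def o (q : ℕ) : TreeVertex q := ⟨0, [], fun _ _ h _ => absurd rfl h⟩

/-- `l v = d(v, o ⋏ v)` -/
def l (v : TreeVertex q) : ℕ := v.w.length

/-- the height function `h = l - m` -/
def h (v : TreeVertex q) : ℤ := (v.l : ℤ) - (v.m : ℤ)

/-- length of the longest common prefix of two lists -/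
def cpl : List (Fin q) → List (Fin q) → ℕ
  | a :: s, b :: t => if a = b then cpl s t + 1 else 0
  | _, _ => 0

/-- `mPair x y = d(x, x ⋏ y)`, the distance from `x` to the greatest common
ancestor of `x` and `y`. -/
def mPair (x y : TreeVertex q) : ℕ :=
  if x.m < y.m then x.l + (y.m - x.m)
  else if y.m < x.m then x.l
  else x.l - cpl x.w y.w

/-- the graph distance in the tree -/
def dist (x y : TreeVertex q) : ℕ := mPair x y + mPair y x

end TreeVertex

/-- The Diestel–Leader graph `DL_d(q)`: `d`-tuples of tree vertices whose heights
sum to `0`. -/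
structure DL (d q : ℕ) where
  t : Fin d → TreeVertex q
  hsum : ∑ i, (t i).h = 0

namespace DL

variable {d q : ℕ}

/-- the basepoint `id` of `DL_d(q)` -/
def id0 (d q : ℕ) : DL d q :=
  ⟨fun _ => TreeVertex.o q, by simp [TreeVertex.h, TreeVertex.o, TreeVertex.l]⟩

/-- the pairwise coordinate `m_i(x,y) = d_i(p_i x, p_i x ⋏ p_i y)` -/
def mm (x y : DL d q) (i : Fin d) : ℕ := TreeVertex.mPair (x.t i) (y.t i)

/-- the pairwise coordinate `l_i(x,y) = d_i(p_i y, p_i x ⋏ p_i y)` -/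
def ll (x y : DL d q) (i : Fin d) : ℕ := TreeVertex.mPair (y.t i) (x.t i)

/-- the coordinate `m_i(x)` -/
def mc (x : DL d q) (i : Fin d) : ℕ := (x.t i).m

/-- the coordinate `l_i(x)` -/
def lc (x : DL d q) (i : Fin d) : ℕ := (x.t i).l

/-- the height coordinate `h_i(x) = l_i(x) - m_i(x)` -/
def hc (x : DL d q) (i : Fin d) : ℤ := (x.t i).h

/-- The Stein–Taback quantity `f_{σ,i}` (here `i` is 1-based, `2 ≤ i ≤ d`):
`f_{σ,i} = m_{σ(1)} + ⋯ + m_{σ(i)} + l_{σ(i)} + ⋯ + l_{σ(d)}` for `2 ≤ i ≤ d-1`,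
and `f_{σ,d} = 2m_{σ(1)} + m_{σ(2)} + ⋯ + m_{σ(d)} + l_{σ(d)}`. -/
def fST {d : ℕ} (m l : Fin d → ℕ) (σ : Equiv.Perm (Fin d)) (i : ℕ) : ℕ :=
  if i = d then
    (∑ j, m (σ j)) + (∑ j ∈ univ.filter fun j : Fin d => (j : ℕ) = 0, m (σ j))
      + (∑ j ∈ univ.filter fun j : Fin d => (j : ℕ) = d - 1, l (σ j))
  else
    (∑ j ∈ univ.filter fun j : Fin d => (j : ℕ) + 1 ≤ i, m (σ j))
      + (∑ j ∈ univ.filter fun j : Fin d => i ≤ (j : ℕ) + 1, l (σ j))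

/-- The distance on `DL_d(q)`, via the Stein–Taback formula
`d(x,y) = min_{σ ∈ Σ_d} max_{2 ≤ i ≤ d} f_{σ,i}(x,y)`. -/
noncomputable def dist (x y : DL d q) : ℕ :=
  ⨅ σ : Equiv.Perm (Fin d), ⨆ i ∈ Finset.Icc 2 d, fST (mm x y) (ll x y) σ i

end DL

namespace DL3

/-- the label `1` (requires `2 ≤ q`) -/
def one (q : ℕ) (hq : 2 ≤ q) : Fin q := ⟨1, by omega⟩

/-- the tree vertex at depth `k` obtained by descending `k` edges from `o` and
ascending `k` edges all labeled `1`; it satisfies `m = l = k`, `h = 0`. -/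
def ray (q : ℕ) (hq : 2 ≤ q) (k : ℕ) : TreeVertex q :=
  ⟨k, List.replicate k (one q hq), by
    intro a t _ hw
    cases k with
    | zero => simp at hw
    | succ n =>
      rw [List.replicate_succ] at hw
      have : a = one q hq := (List.cons.injEq _ _ _ _).mp hw |>.1.symm
      simp [this, one]⟩

/-- the point `ζ^i_k ∈ DL_3(q)`: `m_i = l_i = k` (upward edges labeled `1`),
all other coordinates trivial -/
def zeta (q : ℕ) (hq : 2 ≤ q) (i : Fin 3) (k : ℕ) : DL 3 q :=
  ⟨fun j => if j = i then ray q hq k else TreeVertex.o q, by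
    have h0 : ∀ j : Fin 3, ((if j = i then ray q hq k else TreeVertex.o q) : TreeVertex q).h = 0 := by
      intro j
      split <;> simp [TreeVertex.h, TreeVertex.l, ray, TreeVertex.o]
    simp [h0]⟩

/-- the sequence `β_n`: `m_3(β_n) = l_3(β_n) = n` along edges labeled `1`,
trivial in the first two trees -/
def beta (q : ℕ) (hq : 2 ≤ q) (n : ℕ) : DL 3 q := zeta q hq 2 n

/-- the sequence `α_n`: `l_1(α_n) = n` (upward edges labeled `1`),
`m_2(α_n) = n`, all other coordinates trivial -/
def alpha (q : ℕ) (hq : 2 ≤ q) (n : ℕ) : DL 3 q :=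
  ⟨![⟨0, List.replicate n (one q hq), fun _ _ h _ => absurd rfl h⟩,
     ⟨n, [], by intro a t _ hw; simp at hw⟩,
     TreeVertex.o q], by
    simp [Fin.sum_univ_three, TreeVertex.h, TreeVertex.l, TreeVertex.o]⟩

/-- the point `ν^{j,ε}_k` (`j ∈ {1,2}`): ascend `k` edges labeled `ε` in tree `j`,
descend `k` edges in tree `3`; so `l_j = k`, `m_3 = k`, all else trivial. -/
def nu (q : ℕ) (j : Fin 2) (ε : Fin q) (k : ℕ) : DL 3 q :=
  ⟨fun i =>
      if i = Fin.castLE (by omega) j then ⟨0, List.replicate k ε, fun _ _ h _ => absurd rfl h⟩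
      else if i = 2 then ⟨k, [], by intro a t _ hw; simp at hw⟩
      else TreeVertex.o q, by
    fin_cases j <;>
      (rw [Fin.sum_univ_three]; simp [TreeVertex.h, TreeVertex.l, TreeVertex.o, Fin.ext_iff])⟩

/-- the horofunction `β` of `DL_3(q)`:
`β(z) = m_1 + m_2 + min_{j=1,2} {m_j + h_3, h_j + h_3, l_j}` -/
def betaFn {q : ℕ} (w : DL 3 q) : ℤ :=
  (DL.mc w 0 : ℤ) + DL.mc w 1 +
    min ((DL.mc w 0 : ℤ) + DL.hc w 2)
      (min (DL.hc w 0 + DL.hc w 2)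
        (min (DL.lc w 0 : ℤ)
          (min ((DL.mc w 1 : ℤ) + DL.hc w 2)
            (min (DL.hc w 1 + DL.hc w 2) (DL.lc w 1 : ℤ)))))

end DL3

open DL3

section Aux

variable {q : ℕ}

lemma cpl_nil_right (s : List (Fin q)) : TreeVertex.cpl s ([] : List (Fin q)) = 0 := by
  cases s <;> rfl

lemma mPair_o_right (x : TreeVertex q) : TreeVertex.mPair x (TreeVertex.o q) = x.l := by
  simp only [TreeVertex.mPair, TreeVertex.o, cpl_nil_right]
  split_ifs <;> omega

lemma mPair_o_left (x : TreeVertex q) : TreeVertex.mPair (TreeVertex.o q) x = x.m := by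
  simp only [TreeVertex.mPair, TreeVertex.o, TreeVertex.l, List.length_nil]
  have : TreeVertex.cpl ([] : List (Fin q)) x.w = 0 := by cases x.w <;> rfl
  by_cases h1 : 0 < x.m
  · simp only [h1, ↓reduceIte]; omega
  · simp only [h1, ↓reduceIte, show ¬ x.m < 0 by omega]; omega

lemma mPair_ray1_right (hq : 2 ≤ q) (x : TreeVertex q) (hx : 1 ≤ x.m) :
    TreeVertex.mPair x (ray q hq 1) ≤ x.l := by
  simp only [TreeVertex.mPair, ray]
  have h1 : TreeVertex.cpl x.w (List.replicate 1 (one q hq)) ≤ x.l := by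
    have : ∀ s t : List (Fin q), TreeVertex.cpl s t ≤ s.length := by
      intro s
      induction s with
      | nil => intro t; cases t <;> simp [TreeVertex.cpl]
      | cons a s ih =>
        intro t
        cases t with
        | nil => simp [TreeVertex.cpl]
        | cons b t =>
          simp only [TreeVertex.cpl]
          split_ifs
          · simpa using ih t
          · simp
    exact this _ _
  simp only [show ¬ x.m < 1 by omega, ↓reduceIte]
  by_cases h2 : 1 < x.m
  · simp only [h2, ↓reduceIte]; omega
  · simp only [h2, ↓reduceIte]; omega

lemma mPair_ray1_left (hq : 2 ≤ q) (x : TreeVertex q) (hx : 1 ≤ x.m) :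
    TreeVertex.mPair (ray q hq 1) x ≤ x.m := by
  simp only [TreeVertex.mPair, ray, TreeVertex.l, List.length_replicate]
  split_ifs <;> omega

lemma biSup_mono_nat (s : Finset ℕ) (f g : ℕ → ℕ) (h : ∀ i ∈ s, f i ≤ g i) :
    (⨆ i ∈ s, f i) ≤ ⨆ i ∈ s, g i := by
  have bdd : BddAbove (Set.range fun i => ⨆ _ : i ∈ s, g i) := by
    refine ⟨s.sup g, ?_⟩
    rintro _ ⟨i, rfl⟩
    by_cases hi : i ∈ s
    · dsimp only; rw [ciSup_pos hi]; exact Finset.le_sup hi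
    · simp [hi]
  apply ciSup_le
  intro i
  by_cases hi : i ∈ s
  · rw [ciSup_pos hi]
    exact le_trans (h i hi) (le_ciSup_of_le bdd i (by rw [ciSup_pos hi]))
  · simp [hi]

lemma fST_mono {d : ℕ} {m l m' l' : Fin d → ℕ} (hm : ∀ j, m j ≤ m' j)
    (hl : ∀ j, l j ≤ l' j) (σ : Equiv.Perm (Fin d)) (i : ℕ) :
    DL.fST m l σ i ≤ DL.fST m' l' σ i := by
  unfold DL.fST
  split <;> gcongr <;> first | apply hm | apply hl

lemma dist_mono {d : ℕ} (x y y' : DL d q) (hm : ∀ j, DL.mm x y j ≤ DL.mm x y' j)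
    (hl : ∀ j, DL.ll x y j ≤ DL.ll x y' j) : DL.dist x y ≤ DL.dist x y' := by
  unfold DL.dist
  apply ciInf_mono (OrderBot.bddBelow _)
  intro σ
  exact biSup_mono_nat _ _ _ fun i _ => fST_mono hm hl σ i

end Aux

/-- Let `z ∈ DL_3(q)` have `m_i(z) > 0` for `i = 1` or `i = 2`,
and let `ζ = ζ^i_1` (the vertex with `m_i = l_i = 1` via the label-`1` edge, all
else trivial).  Then `d(z,ζ) - d(z,id) ≤ 0`, while the horofunction `β` satisfies
`β(ζ) > 0`; hence `d(z,ζ) - d(z,id) ≠ β(ζ)`. -/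
theorem dist_zeta_ne_betaFn {q : ℕ} (hq : 2 ≤ q) (z : DL 3 q) (i : Fin 3)
    (hi : i = 0 ∨ i = 1) (hz : 0 < DL.mc z i) :
    (DL.dist z (zeta q hq i 1) : ℤ) - (DL.dist z (DL.id0 3 q) : ℤ) ≤ 0 ∧
    0 < betaFn (zeta q hq i 1) ∧
    (DL.dist z (zeta q hq i 1) : ℤ) - (DL.dist z (DL.id0 3 q) : ℤ) ≠
      betaFn (zeta q hq i 1) := by
  have hzm : 1 ≤ (z.t i).m := hz
  have hm : ∀ j, DL.mm z (zeta q hq i 1) j ≤ DL.mm z (DL.id0 3 q) j := by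
    intro j
    simp only [DL.mm, zeta, DL.id0, mPair_o_right]
    by_cases hj : j = i
    · subst hj; simp only [if_pos rfl]; exact mPair_ray1_right hq _ hzm
    · rw [if_neg hj, mPair_o_right]
  have hl : ∀ j, DL.ll z (zeta q hq i 1) j ≤ DL.ll z (DL.id0 3 q) j := by
    intro j
    simp only [DL.ll, zeta, DL.id0, mPair_o_left]
    by_cases hj : j = i
    · subst hj; simp only [if_pos rfl]; exact mPair_ray1_left hq _ hzm
    · rw [if_neg hj, mPair_o_left]
  have hle : DL.dist z (zeta q hq i 1) ≤ DL.dist z (DL.id0 3 q) :=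
    dist_mono _ _ _ hm hl
  have hbeta : betaFn (zeta q hq i 1) = 1 := by
    rcases hi with rfl | rfl <;>
      simp [betaFn, zeta, DL.mc, DL.lc, DL.hc, TreeVertex.h, TreeVertex.l, ray,
        TreeVertex.o]
  refine ⟨by omega, by omega, by omega⟩
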